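/- Any anti-unifier of two e-classes a and b that is obtained by following a cycle in the e-graph, i.e., a pattern of the form p' = q[X ↦ p] where p ∈ AU(a,b) and q is a non-trivial context, is dominated by p: vars(p') ⊇ vars(p) and size(p') ≥ size(p). Hence breaking cycles during e-class anti-unification discards only dominated patterns, and AU(a,b) computed with cycle-breaking is a finite set. -/

import Mathlib

/-! STATEMENT 14: Any anti-unifier obtained by following a cycle, i.e. a
pattern p′ = q[X ↦ p] for a non-trivial context q, is dominated by p:
vars(p′) ⊇ vars(p) and size(p′) ≥ size(p) (indeed size(p′) = size(q) − 1 +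
size(p)).  Hence breaking cycles during e-class anti-unification discards
only dominated patterns. -/

/-- Patterns: terms over constructors from `S` that may contain variables from `V`. -/
inductive Pat (S V : Type) : Type where
  | var : V → Pat S V
  | con : S → List (Pat S V) → Pat S V

namespace Pat

variable {S V : Type}

/-- Applying a substitution (a total map from variables to patterns) structurally. -/
def subst (σ : V → Pat S V) : Pat S V → Pat S V
  | .var x => σ x
  | .con s args => .con s (args.attach.map (fun a => subst σ a.1))
  decreasing_by
  all_goals simp_wf
  all_goals (try have h := List.sizeOf_lt_of_mem a.2)
  all_goals omega

/-- Size of a pattern: the number of constructor and variable occurrences. -/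
def size : Pat S V → ℕ
  | .var _ => 1
  | .con _ args => 1 + (args.attach.map (fun a => size a.1)).sum
  decreasing_by
  all_goals simp_wf
  all_goals (try have h := List.sizeOf_lt_of_mem a.2)
  all_goals omega

/-- The list of variable occurrences of a pattern, in left-to-right order. -/
def varsList : Pat S V → List V
  | .var x => [x]
  | .con _ args => args.attach.flatMap (fun a => varsList a.1)
  decreasing_by
  all_goals simp_wf
  all_goals (try have h := List.sizeOf_lt_of_mem a.2)
  all_goals omega

variable [DecidableEq V]

/-- The number of occurrences of variable `x` in pattern `p`. -/
def occurs (x : V) (p : Pat S V) : ℕ := p.varsList.count x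

/-- The (distinct) variables of a pattern. -/
def vars (p : Pat S V) : List V := p.varsList.dedup

/-- A pattern is linear if each of its variables occurs exactly once. -/
def Linear (p : Pat S V) : Prop := p.varsList.Nodup

/-- `use(p, σ) = 1 + Σ_{X ∈ vars(p)} size(σ(X))`: cost of one application. -/
def use (p : Pat S V) (σ : V → Pat S V) : ℕ :=
  1 + (p.vars.map (fun x => (σ x).size)).sum

/-- `save(p, σ) = size(σ(p))`: size of the term matched by `p`. -/
def save (p : Pat S V) (σ : V → Pat S V) : ℕ := (p.subst σ).size

/-- Total compression cost of pattern `p` used once per substitution in `σs`: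
`size(p) + Σ_i (use(p,σ_i) − save(p,σ_i))`. -/
def cost (p : Pat S V) (σs : List (V → Pat S V)) : ℤ :=
  (p.size : ℤ) + (σs.map (fun σ => (p.use σ : ℤ) - (p.save σ : ℤ))).sum

end Pat


/-! Substituting `p` for the single hole `X` of `q` keeps every occurrence of a variable of `p`
and replaces one leaf of `q` by the whole of `p`, so `size q[X ↦ p] = size q - 1 + size p`;
a context other than the bare hole has size at least 2, which makes the result strictly larger
than `p`. -/

namespace Pat

variable {S V : Type}

theorem size_var (x : V) : (var x : Pat S V).size = 1 := by
  rw [size]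

theorem size_con (s : S) (args : List (Pat S V)) :
    (con s args).size = 1 + (args.map size).sum := by
  rw [size]; simp

theorem varsList_var (x : V) : (var x : Pat S V).varsList = [x] := by
  rw [varsList]

theorem varsList_con (s : S) (args : List (Pat S V)) :
    (con s args).varsList = args.flatMap varsList := by
  rw [varsList]; simp

theorem subst_con (σ : V → Pat S V) (s : S) (args : List (Pat S V)) :
    (con s args).subst σ = con s (args.map (subst σ)) := by
  rw [subst]; simp

theorem one_le_size (p : Pat S V) : 1 ≤ p.size := by
  cases p <;> simp [size_var, size_con]

theorem two_le_size_of_mem_varsList {q : Pat S V} {x : V} (hx : x ∈ q.varsList)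
    (hq : q ≠ var x) : 2 ≤ q.size := by
  cases q with
  | var y =>
    rw [varsList_var, List.mem_singleton] at hx
    exact absurd (hx ▸ rfl) hq
  | con s args =>
    obtain ⟨a, ha, -⟩ := List.mem_flatMap.mp ((varsList_con s args) ▸ hx)
    have : a.size ≤ (args.map size).sum := List.le_sum_of_mem (List.mem_map_of_mem ha)
    rw [size_con]
    linarith [one_le_size a]

theorem varsList_subst (σ : V → Pat S V) (q : Pat S V) :
    (q.subst σ).varsList = q.varsList.flatMap fun x => (σ x).varsList := by
  induction q using subst.induct with
  | case1 x => rw [subst, varsList_var, List.flatMap_singleton]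
  | case2 s args ih =>
    rw [subst_con, varsList_con, varsList_con, List.flatMap_map, List.flatMap_assoc]
    exact List.flatMap_congr fun a ha => ih ⟨a, ha⟩

theorem mem_varsList_subst {σ : V → Pat S V} {q : Pat S V} {x v : V}
    (hx : x ∈ q.varsList) (hv : v ∈ (σ x).varsList) : v ∈ (q.subst σ).varsList := by
  rw [varsList_subst]
  exact List.mem_flatMap.mpr ⟨x, hx, hv⟩

/-- Each variable occurrence of `q` (a leaf of size 1) is replaced by a pattern of size `size (σ x)`;
stated additively to avoid truncated subtraction. -/
theorem size_subst_add_length (σ : V → Pat S V) (q : Pat S V) :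
    (q.subst σ).size + q.varsList.length
      = q.size + (q.varsList.map fun x => (σ x).size).sum := by
  induction q using subst.induct with
  | case1 x => rw [subst, size_var, varsList_var]; simp [add_comm]
  | case2 s args ih =>
    rw [subst_con, size_con, size_con, varsList_con, List.length_flatMap, List.map_flatMap,
      List.flatMap_def, List.sum_flatten, List.map_map, List.map_map]
    calc 1 + (args.map fun a => (a.subst σ).size).sum + (args.map fun a => a.varsList.length).sum
        = 1 + (args.map fun a => (a.subst σ).size + a.varsList.length).sum := by
          rw [List.sum_map_add, add_assoc]
      _ = 1 + (args.map fun a => a.size + (a.varsList.map fun x => (σ x).size).sum).sum := by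
          congr 2
          exact List.map_congr_left fun a ha => ih ⟨a, ha⟩
      _ = _ := by rw [List.sum_map_add, add_assoc]; rfl

variable [DecidableEq V]

theorem sum_map_size_add_count {σ : V → Pat S V} {X : V} (hσ : ∀ v, v ≠ X → σ v = var v)
    (l : List V) :
    (l.map fun x => (σ x).size).sum + l.count X = l.length + l.count X * (σ X).size := by
  induction l with
  | nil => simp
  | cons y l ih =>
    by_cases hy : y = X
    · subst hy
      simp only [List.map_cons, List.sum_cons, List.count_cons_self, List.length_cons]
      linarith
    · simp only [List.map_cons, List.sum_cons, List.count_cons_of_ne hy, List.length_cons,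
        hσ y hy, size_var]
      linarith

theorem size_subst_add_occurs {σ : V → Pat S V} {X : V} (hσ : ∀ v, v ≠ X → σ v = var v)
    (q : Pat S V) :
    (q.subst σ).size + q.occurs X = q.size + q.occurs X * (σ X).size := by
  have h := size_subst_add_length σ q
  have h' := sum_map_size_add_count hσ q.varsList
  unfold occurs
  omega

end Pat

/-- A pattern produced by following a cycle — `p' = q[X ↦ p]` where `q` is a
non-trivial context with a single occurrence of the hole variable `X` — is
dominated by `p`: it contains all the variables of `p` and is at least as
large (indeed `size p' = size q − 1 + size p ≥ size p + 1`). -/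
theorem cycle_pattern_dominated {S V : Type} [DecidableEq V]
    (p q : Pat S V) (X : V)
    (hhole : q.occurs X = 1) (hnontriv : q ≠ Pat.var X)
    (p' : Pat S V)
    (hp' : p' = q.subst (fun v => if v = X then p else Pat.var v)) :
    (∀ v ∈ p.varsList, v ∈ p'.varsList) ∧
    p.size ≤ p'.size ∧
    p'.size = q.size - 1 + p.size ∧
    p.size + 1 ≤ p'.size := by
  have hσ : ∀ v, v ≠ X → (if v = X then p else Pat.var v) = Pat.var v :=
    fun v hv => if_neg hv
  have hX : X ∈ q.varsList := List.count_pos_iff.mp (by unfold Pat.occurs at hhole; omega)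
  have hsize := Pat.size_subst_add_occurs hσ q
  have hq := Pat.two_le_size_of_mem_varsList hX hnontriv
  simp only [hhole, one_mul, ↓reduceIte] at hsize
  subst hp'
  refine ⟨fun v hv => Pat.mem_varsList_subst hX (by rwa [if_pos rfl]), ?_, ?_, ?_⟩ <;> omega
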